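/- Let β > 0, let N ∈ ℝ, N₀ ≥ 0 and B > 0, and let h, f₀ : ℝ^d → ℂ be smooth with ‖h‖_{N+N₀, B/2} < ∞ and ‖f₀‖_{N₀, B/2} < ∞. Then for every ξ ∈ ℝ^d the function x ↦ h(x) f₀(ξ−x) satisfies ‖h(·) f₀(ξ−·)‖_{N,B} ≤ ‖h‖_{N+N₀, B/2} · ‖f₀‖_{N₀, B/2} · (1+|ξ|)^{−N₀}. (Estimate (6.8) in the proof of Theorem 4.) -/

import Mathlib

/-!
STATEMENT 11 (estimate (6.8) in the proof of Theorem 4).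
For `β > 0`, `N ∈ ℝ`, `N₀ ≥ 0`, `B > 0` and smooth `h, f₀ : ℝ^d → ℂ` with
`‖h‖_{N+N₀,B/2} < ∞` and `‖f₀‖_{N₀,B/2} < ∞`, the function
`x ↦ h(x) f₀(ξ−x)` satisfies
`‖h(·) f₀(ξ−·)‖_{N,B} ≤ ‖h‖_{N+N₀,B/2} ‖f₀‖_{N₀,B/2} (1+|ξ|)^{−N₀}`.
-/

open scoped ENNReal

/-- The first-order partial derivative `∂_i f`. -/
noncomputable def pderivOne (d : ℕ) (i : Fin d)
    (f : EuclideanSpace ℝ (Fin d) → ℂ) : EuclideanSpace ℝ (Fin d) → ℂ :=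
  fun x => fderiv ℝ f x (EuclideanSpace.single i (1 : ℝ))

/-- The partial derivative `∂^κ f` of multi-order `κ`. -/
noncomputable def pderivMulti (d : ℕ) (κ : Fin d → ℕ)
    (f : EuclideanSpace ℝ (Fin d) → ℂ) : EuclideanSpace ℝ (Fin d) → ℂ :=
  (List.finRange d).foldr (fun i g => (pderivOne d i)^[κ i] g) f

/-- The (possibly infinite) Gel'fand–Shilov-type norm
`‖f‖_{N,B} = sup_{x,κ} (1+|x|)^N |∂^κ f(x)| / (B^{|κ|} κ^{βκ})`,
with `κ^{βκ} = ∏ i, (κ i)^{β κ i}` and the convention `0^0 = 1`. -/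
noncomputable def gsNorm (d : ℕ) (β N B : ℝ)
    (f : EuclideanSpace ℝ (Fin d) → ℂ) : ℝ≥0∞ :=
  ⨆ (x : EuclideanSpace ℝ (Fin d)) (κ : Fin d → ℕ),
    ENNReal.ofReal ((1 + ‖x‖) ^ N * ‖pderivMulti d κ f x‖ /
      (B ^ (∑ i, κ i) * ∏ i, ((κ i : ℝ) ^ (β * (κ i : ℝ)))))

section lemmas
variable {d : ℕ}

lemma pderivOne_contDiff (i : Fin d) {f : EuclideanSpace ℝ (Fin d) → ℂ}
    (hf : ContDiff ℝ (⊤ : ℕ∞) f) : ContDiff ℝ (⊤ : ℕ∞) (pderivOne d i f) :=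
  (hf.fderiv_right (by simp)).clm_apply contDiff_const

lemma pderivOne_iter_contDiff (i : Fin d) (n : ℕ) {f : EuclideanSpace ℝ (Fin d) → ℂ}
    (hf : ContDiff ℝ (⊤ : ℕ∞) f) : ContDiff ℝ (⊤ : ℕ∞) ((pderivOne d i)^[n] f) := by
  induction n generalizing f with
  | zero => exact hf
  | succ n ih => rw [Function.iterate_succ_apply]; exact ih (pderivOne_contDiff i hf)

lemma pderivOne_mul (i : Fin d) {u v : EuclideanSpace ℝ (Fin d) → ℂ}
    (hu : ContDiff ℝ (⊤ : ℕ∞) u) (hv : ContDiff ℝ (⊤ : ℕ∞) v) :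
    pderivOne d i (fun x => u x * v x)
      = fun x => pderivOne d i u x * v x + u x * pderivOne d i v x := by
  funext x
  simp only [pderivOne, fderiv_fun_mul (hu.differentiable (by simp) x)
    (hv.differentiable (by simp) x)]
  simp [smul_eq_mul]; ring

lemma pderivOne_sum (i : Fin d) {ι : Type*} (s : Finset ι)
    (F : ι → EuclideanSpace ℝ (Fin d) → ℂ) (hF : ∀ j ∈ s, ContDiff ℝ (⊤ : ℕ∞) (F j)) :
    pderivOne d i (fun x => ∑ j ∈ s, F j x) = fun x => ∑ j ∈ s, pderivOne d i (F j) x := by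
  funext x
  simp only [pderivOne, fderiv_fun_sum (fun j hj => ((hF j hj).differentiable (by simp) x))]
  simp

lemma pderivOne_const_mul (i : Fin d) (c : ℂ) {u : EuclideanSpace ℝ (Fin d) → ℂ}
    (hu : ContDiff ℝ (⊤ : ℕ∞) u) :
    pderivOne d i (fun x => c * u x) = fun x => c * pderivOne d i u x := by
  funext x
  simp only [pderivOne, fderiv_const_mul ((hu.differentiable (by simp) x)) c]
  simp

lemma pderivOne_comp_sub (i : Fin d) {f : EuclideanSpace ℝ (Fin d) → ℂ}
    (hf : ContDiff ℝ (⊤ : ℕ∞) f) (ξ : EuclideanSpace ℝ (Fin d)) :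
    pderivOne d i (fun x => f (ξ - x)) = fun x => -pderivOne d i f (ξ - x) := by
  funext x
  have h1 : HasFDerivAt (fun x : EuclideanSpace ℝ (Fin d) => ξ - x)
      (-(ContinuousLinearMap.id ℝ (EuclideanSpace ℝ (Fin d)))) x :=
    (hasFDerivAt_id x).const_sub ξ
  have h2 : HasFDerivAt f (fderiv ℝ f (ξ - x)) (ξ - x) :=
    ((hf.differentiable (by simp)) (ξ - x)).hasFDerivAt
  have h3 : HasFDerivAt (fun x => f (ξ - x))
      ((fderiv ℝ f (ξ - x)).comp (-(ContinuousLinearMap.id ℝ (EuclideanSpace ℝ (Fin d))))) x :=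
    h2.comp x h1
  simp only [pderivOne, h3.fderiv, ContinuousLinearMap.coe_comp',
    Function.comp_apply, ContinuousLinearMap.neg_apply, ContinuousLinearMap.coe_id', id_eq,
    map_neg]
end lemmas
lemma pascal_sum (n : ℕ) (a b : ℕ → ℂ) :
    ∑ k ∈ Finset.range (n+2), (((n+1).choose k : ℕ) : ℂ) * (a k * b (n+1-k))
    = ∑ k ∈ Finset.range (n+1), ((n.choose k : ℕ) : ℂ) * (a (k+1) * b (n-k) + a k * b (n-k+1)) := by
  rw [Finset.sum_range_succ']
  have e1 : ∀ k ∈ Finset.range (n+1),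
      (((n+1).choose (k+1) : ℕ) : ℂ) * (a (k+1) * b (n+1-(k+1)))
      = ((n.choose k : ℕ) : ℂ) * (a (k+1) * b (n-k))
        + ((n.choose (k+1) : ℕ) : ℂ) * (a (k+1) * b (n-k)) := by
    intro k _
    rw [Nat.choose_succ_succ, Nat.succ_sub_succ]
    push_cast
    ring
  rw [Finset.sum_congr rfl e1, Finset.sum_add_distrib]
  have e2 : ∀ k ∈ Finset.range (n+1),
      ((n.choose k : ℕ) : ℂ) * (a (k+1) * b (n-k) + a k * b (n-k+1))
      = ((n.choose k : ℕ) : ℂ) * (a (k+1) * b (n-k))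
        + ((n.choose k : ℕ) : ℂ) * (a k * b (n-k+1)) := by
    intro k _; ring
  rw [Finset.sum_congr rfl e2, Finset.sum_add_distrib]
  have e3 : ∑ k ∈ Finset.range (n+1), ((n.choose (k+1) : ℕ) : ℂ) * (a (k+1) * b (n-k))
      + (((n+1).choose 0 : ℕ) : ℂ) * (a 0 * b (n+1-0))
      = ∑ k ∈ Finset.range (n+1), ((n.choose k : ℕ) : ℂ) * (a k * b (n-k+1)) := by
    rw [Finset.sum_range_succ' (fun k => ((n.choose k : ℕ) : ℂ) * (a k * b (n-k+1))) n]
    have e4 : ∀ k ∈ Finset.range n,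
        ((n.choose (k+1) : ℕ) : ℂ) * (a (k+1) * b (n-(k+1)+1))
        = ((n.choose (k+1) : ℕ) : ℂ) * (a (k+1) * b (n-k)) := by
      intro k hk
      have : n - (k+1) + 1 = n - k := by
        have := Finset.mem_range.mp hk; omega
      rw [this]
    rw [Finset.sum_congr rfl e4, Finset.sum_range_succ
      (fun k => ((n.choose (k+1) : ℕ) : ℂ) * (a (k+1) * b (n-k))) n]
    simp [Nat.choose_succ_self]
  rw [add_assoc, e3]

section iter
variable {d : ℕ}

lemma pderivOne_iter_const_mul (i : Fin d) (n : ℕ) (c : ℂ)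
    {u : EuclideanSpace ℝ (Fin d) → ℂ} (hu : ContDiff ℝ (⊤ : ℕ∞) u) :
    (pderivOne d i)^[n] (fun x => c * u x) = fun x => c * (pderivOne d i)^[n] u x := by
  induction n generalizing u with
  | zero => rfl
  | succ n ih =>
    rw [Function.iterate_succ_apply, pderivOne_const_mul i c hu,
      ih (pderivOne_contDiff i hu), Function.iterate_succ_apply]

lemma pderivOne_iter_sum (i : Fin d) (n : ℕ) {ι : Type*} (s : Finset ι)
    (F : ι → EuclideanSpace ℝ (Fin d) → ℂ) (hF : ∀ j ∈ s, ContDiff ℝ (⊤ : ℕ∞) (F j)) :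
    (pderivOne d i)^[n] (fun x => ∑ j ∈ s, F j x)
      = fun x => ∑ j ∈ s, (pderivOne d i)^[n] (F j) x := by
  induction n generalizing F with
  | zero => rfl
  | succ n ih =>
    rw [Function.iterate_succ_apply, pderivOne_sum i s F hF,
      ih _ (fun j hj => pderivOne_contDiff i (hF j hj))]
    funext x
    exact Finset.sum_congr rfl (fun j _ => by rw [Function.iterate_succ_apply])

lemma pderivOne_iter_mul (i : Fin d) (n : ℕ)
    {u v : EuclideanSpace ℝ (Fin d) → ℂ} (hu : ContDiff ℝ (⊤ : ℕ∞) u) (hv : ContDiff ℝ (⊤ : ℕ∞) v) :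
    (pderivOne d i)^[n] (fun x => u x * v x)
      = fun x => ∑ k ∈ Finset.range (n+1), ((n.choose k : ℕ) : ℂ) *
          ((pderivOne d i)^[k] u x * (pderivOne d i)^[n-k] v x) := by
  induction n generalizing u v with
  | zero => funext x; simp
  | succ n ih =>
    rw [Function.iterate_succ_apply', ih hu hv]
    have hsm : ∀ k ∈ Finset.range (n+1), ContDiff ℝ (⊤ : ℕ∞)
        (fun x => ((n.choose k : ℕ) : ℂ) *
          ((pderivOne d i)^[k] u x * (pderivOne d i)^[n-k] v x)) := by
      intro k _
      exact (contDiff_const.mul ((pderivOne_iter_contDiff i k hu).mul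
        (pderivOne_iter_contDiff i (n-k) hv)))
    rw [pderivOne_sum i _ _ hsm]
    funext x
    rw [show n + 1 + 1 = n + 2 from rfl, pascal_sum n (fun k => (pderivOne d i)^[k] u x)
      (fun k => (pderivOne d i)^[k] v x)]
    refine Finset.sum_congr rfl (fun k _ => ?_)
    rw [pderivOne_const_mul i _ ((pderivOne_iter_contDiff i k hu).mul
      (pderivOne_iter_contDiff i (n-k) hv)),
      pderivOne_mul i (pderivOne_iter_contDiff i k hu) (pderivOne_iter_contDiff i (n-k) hv)]
    simp only [← Function.iterate_succ_apply' (pderivOne d i)]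
end iter

section dl
variable {d : ℕ}

noncomputable def Dl (d : ℕ) (l : List (Fin d)) (κ : Fin d → ℕ)
    (f : EuclideanSpace ℝ (Fin d) → ℂ) : EuclideanSpace ℝ (Fin d) → ℂ :=
  l.foldr (fun i g => (pderivOne d i)^[κ i] g) f

@[simp] lemma Dl_nil (κ : Fin d → ℕ) (f : EuclideanSpace ℝ (Fin d) → ℂ) :
    Dl d [] κ f = f := rfl

lemma Dl_cons (i : Fin d) (t : List (Fin d)) (κ : Fin d → ℕ)
    (f : EuclideanSpace ℝ (Fin d) → ℂ) :
    Dl d (i :: t) κ f = (pderivOne d i)^[κ i] (Dl d t κ f) := rfl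

lemma Dl_contDiff (l : List (Fin d)) (κ : Fin d → ℕ) {f : EuclideanSpace ℝ (Fin d) → ℂ}
    (hf : ContDiff ℝ (⊤ : ℕ∞) f) : ContDiff ℝ (⊤ : ℕ∞) (Dl d l κ f) := by
  induction l with
  | nil => exact hf
  | cons i t ih => exact pderivOne_iter_contDiff i (κ i) ih

lemma Dl_congr (l : List (Fin d)) {κ κ' : Fin d → ℕ} (hκ : ∀ i ∈ l, κ i = κ' i)
    (f : EuclideanSpace ℝ (Fin d) → ℂ) : Dl d l κ f = Dl d l κ' f := by
  induction l with
  | nil => rfl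
  | cons i t ih =>
    rw [Dl_cons, Dl_cons, hκ i List.mem_cons_self,
      ih (fun j hj => hκ j (List.mem_cons_of_mem i hj))]

lemma Dl_const_mul (l : List (Fin d)) (κ : Fin d → ℕ) (c : ℂ)
    {u : EuclideanSpace ℝ (Fin d) → ℂ} (hu : ContDiff ℝ (⊤ : ℕ∞) u) :
    Dl d l κ (fun x => c * u x) = fun x => c * Dl d l κ u x := by
  induction l with
  | nil => rfl
  | cons i t ih =>
    rw [Dl_cons, ih, pderivOne_iter_const_mul i (κ i) c (Dl_contDiff t κ hu), Dl_cons]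

lemma pderivOne_iter_comp_sub (i : Fin d) (n : ℕ) {f : EuclideanSpace ℝ (Fin d) → ℂ}
    (hf : ContDiff ℝ (⊤ : ℕ∞) f) (ξ : EuclideanSpace ℝ (Fin d)) :
    (pderivOne d i)^[n] (fun x => f (ξ - x))
      = fun x => (-1 : ℂ)^n * (pderivOne d i)^[n] f (ξ - x) := by
  induction n generalizing f with
  | zero => funext x; simp
  | succ n ih =>
    rw [Function.iterate_succ_apply, pderivOne_comp_sub i hf ξ]
    have : (fun x => -pderivOne d i f (ξ - x))
        = fun x => (-1 : ℂ) * pderivOne d i f (ξ - x) := by funext x; ring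
    have hcomp : ContDiff ℝ (⊤ : ℕ∞) (fun x => pderivOne d i f (ξ - x)) :=
      (pderivOne_contDiff i hf).comp (contDiff_const.sub contDiff_id)
    rw [this, pderivOne_iter_const_mul i n (-1 : ℂ) hcomp,
      ih (pderivOne_contDiff i hf)]
    funext x
    rw [Function.iterate_succ_apply]
    ring

lemma Dl_comp_sub (l : List (Fin d)) (κ : Fin d → ℕ) {f : EuclideanSpace ℝ (Fin d) → ℂ}
    (hf : ContDiff ℝ (⊤ : ℕ∞) f) (ξ : EuclideanSpace ℝ (Fin d)) :
    Dl d l κ (fun x => f (ξ - x))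
      = fun x => (-1 : ℂ)^((l.map κ).sum) * Dl d l κ f (ξ - x) := by
  induction l with
  | nil => funext x; simp
  | cons i t ih =>
    have hcomp : ContDiff ℝ (⊤ : ℕ∞) (fun x => Dl d t κ f (ξ - x)) :=
      (Dl_contDiff t κ hf).comp (contDiff_const.sub contDiff_id)
    rw [Dl_cons, ih, pderivOne_iter_const_mul i (κ i) _ hcomp,
      pderivOne_iter_comp_sub i (κ i) (Dl_contDiff t κ hf) ξ]
    funext x
    rw [List.map_cons, List.sum_cons, Dl_cons]
    rw [pow_add]
    ring

lemma sum_update {M : Type*} [AddCommMonoid M] (i : Fin d) (κ : Fin d → ℕ)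
    (g : (Fin d → ℕ) → M) :
    ∑ μ ∈ Fintype.piFinset (fun j => Finset.range (κ j + 1)), g μ
      = ∑ p ∈ (Fintype.piFinset (fun j => Finset.range (Function.update κ i 0 j + 1))
          ×ˢ Finset.range (κ i + 1)), g (Function.update p.1 i p.2) := by
  refine Finset.sum_nbij' (fun μ => (Function.update μ i 0, μ i))
    (fun p => Function.update p.1 i p.2) ?_ ?_ ?_ ?_ ?_
  · intro μ hμ
    rw [Fintype.mem_piFinset] at hμ
    rw [Finset.mem_product]
    constructor
    · rw [Fintype.mem_piFinset]
      intro j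
      by_cases hj : j = i
      · subst hj; simp
      · simp only [Function.update_of_ne hj]
        exact hμ j
    · exact hμ i
  · intro p hp
    rw [Finset.mem_product] at hp
    obtain ⟨h1, h2⟩ := hp
    rw [Fintype.mem_piFinset] at h1 ⊢
    intro j
    by_cases hj : j = i
    · subst hj; simpa using h2
    · simp only [Function.update_of_ne hj]
      have := h1 j
      rwa [Function.update_of_ne hj] at this
  · intro μ hμ
    simp only [Function.update_idem, Function.update_eq_self]
  · intro p hp
    rw [Finset.mem_product] at hp
    have h0 : p.1 i = 0 := by
      have := (Fintype.mem_piFinset).mp hp.1 i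
      simpa using this
    ext
    · simp only [Function.update_idem]
      rw [← h0, Function.update_eq_self]
    · simp
  · intro μ hμ
    simp only [Function.update_idem, Function.update_eq_self]

lemma Dl_leibniz (l : List (Fin d)) (hnd : l.Nodup) (κ : Fin d → ℕ)
    (hκ : ∀ j, j ∉ l → κ j = 0) {u v : EuclideanSpace ℝ (Fin d) → ℂ}
    (hu : ContDiff ℝ (⊤ : ℕ∞) u) (hv : ContDiff ℝ (⊤ : ℕ∞) v) :
    Dl d l κ (fun x => u x * v x)
      = fun x => ∑ μ ∈ Fintype.piFinset (fun j => Finset.range (κ j + 1)),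
          ((∏ j, (κ j).choose (μ j) : ℕ) : ℂ) *
            (Dl d l μ u x * Dl d l (fun j => κ j - μ j) v x) := by
  induction l generalizing κ with
  | nil =>
    have hκ0 : κ = fun _ => 0 := funext fun j => hκ j List.not_mem_nil
    subst hκ0
    have hset : Fintype.piFinset (fun j : Fin d => Finset.range (0 + 1))
        = {fun _ => 0} := by
      ext μ
      simp [Fintype.mem_piFinset, Nat.lt_one_iff, funext_iff]
    funext x
    rw [hset, Finset.sum_singleton]
    simp
  | cons i t ih =>
    obtain ⟨hit, hnd'⟩ := List.nodup_cons.mp hnd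
    set κt := Function.update κ i 0 with hκt_def
    have hagree : ∀ j ∈ t, κ j = κt j := by
      intro j hj
      have hji : j ≠ i := fun h => hit (h ▸ hj)
      rw [hκt_def, Function.update_of_ne hji]
    have hκt0 : ∀ j, j ∉ t → κt j = 0 := by
      intro j hj
      by_cases hji : j = i
      · subst hji; simp [hκt_def]
      · rw [hκt_def, Function.update_of_ne hji]
        exact hκ j (by simp [hji, hj])
    have hlam0 : ∀ μ ∈ Fintype.piFinset (fun j => Finset.range (κt j + 1)), μ i = 0 := by
      intro μ hμ
      have := Fintype.mem_piFinset.mp hμ i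
      simp [hκt_def] at this
      exact this
    have IH := ih hnd' κt hκt0
    have hsm : ∀ lam ∈ Fintype.piFinset (fun j => Finset.range (κt j + 1)),
        ContDiff ℝ (⊤ : ℕ∞) (fun x => ((∏ j, (κt j).choose (lam j) : ℕ) : ℂ) *
          (Dl d t lam u x * Dl d t (fun j => κt j - lam j) v x)) :=
      fun lam _ => contDiff_const.mul ((Dl_contDiff t lam hu).mul
        (Dl_contDiff t (fun j => κt j - lam j) hv))
    rw [Dl_cons, Dl_congr t hagree, IH, pderivOne_iter_sum i (κ i) _ _ hsm]
    funext x
    have key : ∀ lam ∈ Fintype.piFinset (fun j => Finset.range (κt j + 1)),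
        (pderivOne d i)^[κ i] (fun y => ((∏ j, (κt j).choose (lam j) : ℕ) : ℂ) *
          (Dl d t lam u y * Dl d t (fun j => κt j - lam j) v y)) x
        = ∑ k ∈ Finset.range (κ i + 1),
            ((∏ j, (κ j).choose ((Function.update lam i k) j) : ℕ) : ℂ) *
              (Dl d (i :: t) (Function.update lam i k) u x *
               Dl d (i :: t) (fun j => κ j - Function.update lam i k j) v x) := by
      intro lam hlam
      rw [pderivOne_iter_const_mul i (κ i) _
        ((Dl_contDiff t lam hu).mul (Dl_contDiff t (fun j => κt j - lam j) hv)),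
        pderivOne_iter_mul i (κ i) (Dl_contDiff t lam hu)
          (Dl_contDiff t (fun j => κt j - lam j) hv)]
      simp only [Finset.mul_sum]
      refine Finset.sum_congr rfl (fun k hk => ?_)
      have eu : Dl d (i :: t) (Function.update lam i k) u
          = (pderivOne d i)^[k] (Dl d t lam u) := by
        rw [Dl_cons, Function.update_self,
          Dl_congr t (fun j hj => Function.update_of_ne (by rintro rfl; exact hit hj) k lam)]
      have ev : Dl d (i :: t) (fun j => κ j - Function.update lam i k j) v
          = (pderivOne d i)^[κ i - k] (Dl d t (fun j => κt j - lam j) v) := by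
        rw [Dl_cons]
        simp only [Function.update_self]
        rw [Dl_congr t (κ' := fun j => κt j - lam j) (fun j hj => by
          have hji : j ≠ i := by rintro rfl; exact hit hj
          rw [Function.update_of_ne hji, hagree j hj])]
      have ec : (∏ j, (κ j).choose (Function.update lam i k j))
          = (κ i).choose k * ∏ j, (κt j).choose (lam j) := by
        rw [Finset.prod_eq_mul_prod_sdiff_singleton_of_mem (Finset.mem_univ i)
            (fun j => (κ j).choose (Function.update lam i k j)),
          Finset.prod_eq_mul_prod_sdiff_singleton_of_mem (Finset.mem_univ i)
            (fun j => (κt j).choose (lam j))]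
        rw [Function.update_self, hlam0 lam hlam]
        have hpr : ∏ j ∈ Finset.univ \ {i}, (κ j).choose (Function.update lam i k j)
            = ∏ j ∈ Finset.univ \ {i}, (κt j).choose (lam j) := by
          refine Finset.prod_congr rfl (fun j hj => ?_)
          have hji : j ≠ i := by simpa using (Finset.mem_sdiff.mp hj).2
          rw [Function.update_of_ne hji, hκt_def, Function.update_of_ne hji]
        rw [hpr]
        simp only [hκt_def, Function.update_self, Nat.choose_zero_right, one_mul]
      rw [eu, ev, ec]
      push_cast
      ring
    rw [Finset.sum_congr rfl key, ← Finset.sum_product', sum_update i κ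
      (fun μ => ((∏ j, (κ j).choose (μ j) : ℕ) : ℂ) *
        (Dl d (i :: t) μ u x * Dl d (i :: t) (fun j => κ j - μ j) v x))]

end dl

section analysis
variable {d : ℕ}

lemma rpow_factor_le {β : ℝ} (hβ : 0 < β) {a n : ℕ} (h : a ≤ n) :
    ((a:ℝ))^(β*(a:ℝ)) * (((n-a : ℕ):ℝ))^(β*((n-a:ℕ):ℝ)) ≤ (n:ℝ)^(β*(n:ℝ)) := by
  rcases Nat.eq_zero_or_pos a with ha | ha
  · subst ha
    simp
  rcases eq_or_lt_of_le h with rfl | hlt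
  · simp
  · have ha1 : (1:ℝ) ≤ (a:ℝ) := by exact_mod_cast ha
    have hn1 : (1:ℝ) ≤ (n:ℝ) := by
      have : 1 ≤ n := le_trans ha h
      exact_mod_cast this
    have hn0 : (0:ℝ) < (n:ℝ) := lt_of_lt_of_le one_pos hn1
    have han : (a:ℝ) ≤ (n:ℝ) := by exact_mod_cast h
    have hsub : (((n-a:ℕ)):ℝ) = (n:ℝ) - (a:ℝ) := by
      exact Nat.cast_sub h
    have h1 : ((a:ℝ))^(β*(a:ℝ)) ≤ (n:ℝ)^(β*(a:ℝ)) :=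
      Real.rpow_le_rpow (by positivity) han (by positivity)
    have h2 : (((n-a:ℕ)):ℝ)^(β*((n-a:ℕ):ℝ)) ≤ (n:ℝ)^(β*((n-a:ℕ):ℝ)) :=
      Real.rpow_le_rpow (by positivity) (by rw [hsub]; linarith) (by positivity)
    calc ((a:ℝ))^(β*(a:ℝ)) * (((n-a : ℕ):ℝ))^(β*((n-a:ℕ):ℝ))
        ≤ (n:ℝ)^(β*(a:ℝ)) * (n:ℝ)^(β*((n-a:ℕ):ℝ)) := by
          apply mul_le_mul h1 h2 (by positivity) (by positivity)
      _ = (n:ℝ)^(β*(a:ℝ) + β*((n-a:ℕ):ℝ)) := (Real.rpow_add hn0 _ _).symm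
      _ = (n:ℝ)^(β*(n:ℝ)) := by rw [hsub]; ring_nf

lemma rpow_term_pos {β : ℝ} (k : ℕ) : (0:ℝ) < ((k:ℝ))^(β*(k:ℝ)) := by
  rcases Nat.eq_zero_or_pos k with hk | hk
  · subst hk
    norm_num
  · exact Real.rpow_pos_of_pos (by exact_mod_cast hk) _

lemma prod_rpow_pos (β : ℝ) (κ : Fin d → ℕ) :
    (0:ℝ) < ∏ i, ((κ i : ℝ) ^ (β * (κ i : ℝ))) :=
  Finset.prod_pos fun i _ => rpow_term_pos (κ i)

lemma pderivMulti_eq_Dl (κ : Fin d → ℕ) (f : EuclideanSpace ℝ (Fin d) → ℂ) :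
    pderivMulti d κ f = Dl d (List.finRange d) κ f := rfl

lemma gsNorm_point_le (β N Bv : ℝ) (f : EuclideanSpace ℝ (Fin d) → ℂ)
    (x : EuclideanSpace ℝ (Fin d)) (κ : Fin d → ℕ) :
    ENNReal.ofReal ((1 + ‖x‖) ^ N * ‖pderivMulti d κ f x‖ /
      (Bv ^ (∑ i, κ i) * ∏ i, ((κ i : ℝ) ^ (β * (κ i : ℝ))))) ≤ gsNorm d β N Bv f := by
  unfold gsNorm
  exact le_iSup_of_le x (le_iSup_of_le κ le_rfl)

lemma abs_pderivMulti_le (β N Bv : ℝ) (hBv : 0 < Bv) {f : EuclideanSpace ℝ (Fin d) → ℂ}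
    (hfn : gsNorm d β N Bv f ≠ ⊤)
    (x : EuclideanSpace ℝ (Fin d)) (κ : Fin d → ℕ) :
    ‖pderivMulti d κ f x‖ ≤ (gsNorm d β N Bv f).toReal *
      (Bv ^ (∑ i, κ i) * ∏ i, ((κ i : ℝ) ^ (β * (κ i : ℝ)))) * (1 + ‖x‖) ^ (-N) := by
  have hx : (0:ℝ) < 1 + ‖x‖ := by positivity
  have hD : (0:ℝ) < Bv ^ (∑ i, κ i) * ∏ i, ((κ i : ℝ) ^ (β * (κ i : ℝ))) := by
    have := prod_rpow_pos (d := d) β κ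
    positivity
  have h1 := gsNorm_point_le β N Bv f x κ
  have h2 := ENNReal.toReal_mono hfn h1
  rw [ENNReal.toReal_ofReal (by positivity)] at h2
  -- h2 : (1+‖x‖)^N * abs / D ≤ M
  rw [div_le_iff₀ hD] at h2
  have hxN : (0:ℝ) < (1 + ‖x‖) ^ N := Real.rpow_pos_of_pos hx N
  have h3 : ‖pderivMulti d κ f x‖ ≤
      (gsNorm d β N Bv f).toReal * (Bv ^ (∑ i, κ i) * ∏ i, ((κ i : ℝ) ^ (β * (κ i : ℝ)))) /
        (1 + ‖x‖) ^ N := by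
    rw [le_div_iff₀ hxN]
    nlinarith [h2]
  rw [Real.rpow_neg (le_of_lt hx), div_eq_mul_inv] at *
  exact h3

lemma sum_prod_choose (κ : Fin d → ℕ) :
    ∑ μ ∈ Fintype.piFinset (fun j => Finset.range (κ j + 1)),
      (∏ j, (κ j).choose (μ j)) = 2 ^ (∑ i, κ i) := by
  rw [← Finset.prod_univ_sum (fun j => Finset.range (κ j + 1)) (fun j k => (κ j).choose k)]
  simp only [Nat.sum_range_choose]
  exact Finset.prod_pow_eq_pow_sum _ _ _

end analysis

theorem gsNorm_product_shifted_le
    (d : ℕ) (hd : 1 ≤ d) (β : ℝ) (hβ : 0 < β)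
    (N N₀ B : ℝ) (hN₀ : 0 ≤ N₀) (hB : 0 < B)
    (h f₀ : EuclideanSpace ℝ (Fin d) → ℂ)
    (hh : ContDiff ℝ (⊤ : ℕ∞) h) (hf₀ : ContDiff ℝ (⊤ : ℕ∞) f₀)
    (hhn : gsNorm d β (N + N₀) (B / 2) h ≠ ⊤)
    (hf₀n : gsNorm d β N₀ (B / 2) f₀ ≠ ⊤)
    (ξ : EuclideanSpace ℝ (Fin d)) :
    gsNorm d β N B (fun x => h x * f₀ (ξ - x)) ≤
      gsNorm d β (N + N₀) (B / 2) h * gsNorm d β N₀ (B / 2) f₀ *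
        ENNReal.ofReal ((1 + ‖ξ‖) ^ (-N₀)) := by
  set Mh := (gsNorm d β (N + N₀) (B / 2) h).toReal with hMh_def
  set Mf := (gsNorm d β N₀ (B / 2) f₀).toReal with hMf_def
  have hMh0 : 0 ≤ Mh := ENNReal.toReal_nonneg
  have hMf0 : 0 ≤ Mf := ENNReal.toReal_nonneg
  have hB2 : (0:ℝ) < B / 2 := by linarith
  have hF : ContDiff ℝ (⊤ : ℕ∞) (fun x => f₀ (ξ - x)) :=
    hf₀.comp (contDiff_const.sub contDiff_id)
  have key : ∀ (x : EuclideanSpace ℝ (Fin d)) (κ : Fin d → ℕ),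
      (1 + ‖x‖) ^ N * ‖pderivMulti d κ (fun x => h x * f₀ (ξ - x)) x‖ /
        (B ^ (∑ i, κ i) * ∏ i, ((κ i : ℝ) ^ (β * (κ i : ℝ))))
      ≤ Mh * Mf * (1 + ‖ξ‖) ^ (-N₀) := by
    intro x κ
    have hx : (0:ℝ) < 1 + ‖x‖ := by positivity
    have hξx : (0:ℝ) < 1 + ‖ξ - x‖ := by positivity
    have hξ : (0:ℝ) < 1 + ‖ξ‖ := by positivity
    set nκ := ∑ i, κ i with hnκ_def
    set Pκ := ∏ i, ((κ i : ℝ) ^ (β * (κ i : ℝ))) with hPκ_def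
    have hPκ0 : (0:ℝ) < Pκ := prod_rpow_pos β κ
    set W := Mh * Mf * ((B/2) ^ nκ * Pκ) * (1 + ‖x‖) ^ (-(N+N₀)) * (1 + ‖ξ - x‖) ^ (-N₀)
      with hW_def
    have hsupp : ∀ j, j ∉ List.finRange d → κ j = 0 :=
      fun j hj => absurd (List.mem_finRange j) hj
    have heq : pderivMulti d κ (fun x => h x * f₀ (ξ - x)) x
        = ∑ μ ∈ Fintype.piFinset (fun j => Finset.range (κ j + 1)),
            ((∏ j, (κ j).choose (μ j) : ℕ) : ℂ) *
              (pderivMulti d μ h x *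
                ((-1 : ℂ)^(((List.finRange d).map (fun j => κ j - μ j)).sum) *
                  pderivMulti d (fun j => κ j - μ j) f₀ (ξ - x))) := by
      rw [pderivMulti_eq_Dl,
        Dl_leibniz (List.finRange d) (List.nodup_finRange d) κ hsupp hh hF]
      refine Finset.sum_congr rfl (fun μ _ => ?_)
      rw [congrFun (Dl_comp_sub (List.finRange d) (fun j => κ j - μ j) hf₀ ξ) x]
      rfl
    have habs : ‖pderivMulti d κ (fun x => h x * f₀ (ξ - x)) x‖
        ≤ ∑ μ ∈ Fintype.piFinset (fun j => Finset.range (κ j + 1)),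
            ((∏ j, (κ j).choose (μ j) : ℕ) : ℝ) *
              (‖pderivMulti d μ h x‖ *
                ‖pderivMulti d (fun j => κ j - μ j) f₀ (ξ - x)‖) := by
      rw [heq]
      refine le_trans (norm_sum_le _ _) (le_of_eq ?_)
      refine Finset.sum_congr rfl (fun μ _ => ?_)
      simp [norm_mul, norm_pow]
    have hterm : ∀ μ ∈ Fintype.piFinset (fun j => Finset.range (κ j + 1)),
        ((∏ j, (κ j).choose (μ j) : ℕ) : ℝ) *
          (‖pderivMulti d μ h x‖ *
            ‖pderivMulti d (fun j => κ j - μ j) f₀ (ξ - x)‖)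
        ≤ ((∏ j, (κ j).choose (μ j) : ℕ) : ℝ) * W := by
      intro μ hμ
      have hμle : ∀ i, μ i ≤ κ i := fun i =>
        Nat.lt_succ_iff.mp (Finset.mem_range.mp (Fintype.mem_piFinset.mp hμ i))
      have h1 := abs_pderivMulti_le β (N+N₀) (B/2) hB2 hhn x μ
      have h2 := abs_pderivMulti_le β N₀ (B/2) hB2 hf₀n (ξ - x) (fun j => κ j - μ j)
      have hsum : (∑ i, μ i) + (∑ i, (κ i - μ i)) = nκ := by
        rw [hnκ_def, ← Finset.sum_add_distrib]
        exact Finset.sum_congr rfl fun i _ => Nat.add_sub_cancel' (hμle i)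
      have hP : (∏ i, ((μ i : ℝ) ^ (β * (μ i : ℝ)))) *
          (∏ i, (((κ i - μ i : ℕ) : ℝ) ^ (β * ((κ i - μ i : ℕ) : ℝ)))) ≤ Pκ := by
        rw [← Finset.prod_mul_distrib, hPκ_def]
        refine Finset.prod_le_prod (fun i _ => ?_) (fun i _ => rpow_factor_le hβ (hμle i))
        positivity
      refine mul_le_mul_of_nonneg_left ?_ (Nat.cast_nonneg _)
      calc ‖pderivMulti d μ h x‖ *
            ‖pderivMulti d (fun j => κ j - μ j) f₀ (ξ - x)‖
          ≤ ((gsNorm d β (N + N₀) (B / 2) h).toReal *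
              ((B/2) ^ (∑ i, μ i) * ∏ i, ((μ i : ℝ) ^ (β * (μ i : ℝ)))) *
                (1 + ‖x‖) ^ (-(N+N₀))) *
            ((gsNorm d β N₀ (B / 2) f₀).toReal *
              ((B/2) ^ (∑ i, (κ i - μ i)) *
                ∏ i, (((κ i - μ i : ℕ) : ℝ) ^ (β * ((κ i - μ i : ℕ) : ℝ)))) *
                (1 + ‖ξ - x‖) ^ (-N₀)) := by
            apply mul_le_mul h1 h2 (norm_nonneg _)
            have := Real.rpow_pos_of_pos hx (-(N+N₀))
            have := prod_rpow_pos (d := d) β μ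
            positivity
        _ = Mh * Mf * (((B/2) ^ (∑ i, μ i) * (B/2) ^ (∑ i, (κ i - μ i))) *
              ((∏ i, ((μ i : ℝ) ^ (β * (μ i : ℝ)))) *
               (∏ i, (((κ i - μ i : ℕ) : ℝ) ^ (β * ((κ i - μ i : ℕ) : ℝ)))))) *
              (1 + ‖x‖) ^ (-(N+N₀)) * (1 + ‖ξ - x‖) ^ (-N₀) := by
            rw [← hMh_def, ← hMf_def]; ring
        _ ≤ W := by
            rw [hW_def, ← pow_add, hsum]
            have hx1 : (0:ℝ) ≤ (1 + ‖x‖) ^ (-(N+N₀)) := le_of_lt (Real.rpow_pos_of_pos hx _)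
            have hx2 : (0:ℝ) ≤ (1 + ‖ξ - x‖) ^ (-N₀) := le_of_lt (Real.rpow_pos_of_pos hξx _)
            have hBn : (0:ℝ) ≤ (B/2) ^ nκ := le_of_lt (pow_pos hB2 _)
            gcongr
            try exact mul_nonneg hMh0 hMf0
    have hsumabs : ‖pderivMulti d κ (fun x => h x * f₀ (ξ - x)) x‖
        ≤ (2:ℝ) ^ nκ * W := by
      refine le_trans habs (le_trans (Finset.sum_le_sum hterm) (le_of_eq ?_))
      rw [← Finset.sum_mul]
      congr 1
      rw [← Nat.cast_sum, sum_prod_choose κ]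
      push_cast
      try rfl
    -- put everything together
    have h2B : (2:ℝ) ^ nκ * (B/2) ^ nκ = B ^ nκ := by
      rw [← mul_pow]
      congr 1
      ring
    have hW2 : (2:ℝ) ^ nκ * W
        = Mh * Mf * (1 + ‖x‖) ^ (-(N+N₀)) * (1 + ‖ξ - x‖) ^ (-N₀) * (B ^ nκ * Pκ) := by
      rw [hW_def]
      linear_combination (Mh * Mf * Pκ * ((1 + ‖x‖) ^ (-(N+N₀))) *
        ((1 + ‖ξ - x‖) ^ (-N₀))) * h2B
    have hDpos : (0:ℝ) < B ^ nκ * Pκ := by positivity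
    have hxN : (0:ℝ) ≤ (1 + ‖x‖) ^ N := le_of_lt (Real.rpow_pos_of_pos hx N)
    calc (1 + ‖x‖) ^ N * ‖pderivMulti d κ (fun x => h x * f₀ (ξ - x)) x‖ /
          (B ^ nκ * Pκ)
        ≤ (1 + ‖x‖) ^ N * ((2:ℝ) ^ nκ * W) / (B ^ nκ * Pκ) := by gcongr
      _ = (1 + ‖x‖) ^ N * (Mh * Mf * (1 + ‖x‖) ^ (-(N+N₀)) * (1 + ‖ξ - x‖) ^ (-N₀)) := by
          rw [hW2]; field_simp
      _ = Mh * Mf * (((1 + ‖x‖) ^ N * (1 + ‖x‖) ^ (-(N+N₀))) * (1 + ‖ξ - x‖) ^ (-N₀)) := by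
          ring
      _ = Mh * Mf * ((1 + ‖x‖) ^ (-N₀) * (1 + ‖ξ - x‖) ^ (-N₀)) := by
          rw [← Real.rpow_add hx]
          norm_num
      _ ≤ Mh * Mf * (1 + ‖ξ‖) ^ (-N₀) := by
          refine mul_le_mul_of_nonneg_left ?_ (mul_nonneg hMh0 hMf0)
          have hprod : 1 + ‖ξ‖ ≤ (1 + ‖x‖) * (1 + ‖ξ - x‖) := by
            have htri : ‖ξ‖ ≤ ‖x‖ + ‖ξ - x‖ := by
              calc ‖ξ‖ = ‖x + (ξ - x)‖ := by rw [add_sub_cancel]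
                _ ≤ ‖x‖ + ‖ξ - x‖ := norm_add_le _ _
            nlinarith [norm_nonneg x, norm_nonneg (ξ - x)]
          calc (1 + ‖x‖) ^ (-N₀) * (1 + ‖ξ - x‖) ^ (-N₀)
              = ((1 + ‖x‖) * (1 + ‖ξ - x‖)) ^ (-N₀) :=
                (Real.mul_rpow (le_of_lt hx) (le_of_lt hξx)).symm
            _ ≤ (1 + ‖ξ‖) ^ (-N₀) :=
                Real.rpow_le_rpow_of_nonpos hξ hprod (neg_nonpos.mpr hN₀)
  have hbound : gsNorm d β N B (fun x => h x * f₀ (ξ - x))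
      ≤ ENNReal.ofReal (Mh * Mf * (1 + ‖ξ‖) ^ (-N₀)) := by
    rw [gsNorm]
    refine iSup_le fun x => iSup_le fun κ => ?_
    exact ENNReal.ofReal_le_ofReal (key x κ)
  refine le_trans hbound (le_of_eq ?_)
  rw [ENNReal.ofReal_mul (mul_nonneg hMh0 hMf0), ENNReal.ofReal_mul hMh0,
    ENNReal.ofReal_toReal hhn, ENNReal.ofReal_toReal hf₀n]
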